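/- arXiv:2507.17920 — 3 statements merged into one kernel-verified Lean document; each statement's English description precedes it below -/
import Mathlib

section
/- Let T be a self-adjoint linear operator on an n-dimensional real inner product space V and let 1 ≤ k ≤ n. Then the following are equivalent: (1) the sum of any k eigenvalues of T (counted with multiplicity) is positive; (2) for every orthonormal family y_1, …, y_k in V, the sum ⟨T y_1, y_1⟩ + … + ⟨T y_k, y_k⟩ is positive. -/
open Module RealInnerProductSpace

/-- Bathtub principle for a monotone function. -/
lemma bathtub_mono {n k : ℕ} (hkn : k ≤ n) (μ : Fin n → ℝ) (hμ : Monotone μ)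
    (e : Fin n → ℝ) (he0 : ∀ j, 0 ≤ e j) (he1 : ∀ j, e j ≤ 1)
    (hsum : ∑ j, e j = (k : ℝ)) (hk : 1 ≤ k) :
    ∑ i : Fin k, μ (Fin.castLE hkn i) ≤ ∑ j, μ j * e j := by
  classical
  set A : Finset (Fin n) := Finset.univ.image (Fin.castLE hkn) with hA
  have hinj : Function.Injective (Fin.castLE hkn) := Fin.castLE_injective hkn
  have hAleft : ∑ i : Fin k, μ (Fin.castLE hkn i) = ∑ j ∈ A, μ j := by
    rw [hA, Finset.sum_image (fun a _ b _ h => hinj h)]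
  have hcard : (A.card : ℝ) = (k : ℝ) := by
    rw [hA, Finset.card_image_of_injective _ hinj]; simp
  have hmem : ∀ j : Fin n, j ∈ A ↔ (j : ℕ) < k := by
    intro j
    simp only [hA, Finset.mem_image, Finset.mem_univ, true_and]
    constructor
    · rintro ⟨i, rfl⟩; exact i.isLt
    · intro hj; exact ⟨⟨(j : ℕ), hj⟩, by ext; simp⟩
  set l : Fin n := ⟨k - 1, lt_of_lt_of_le (by omega) hkn⟩ with hl
  set m : ℝ := μ l with hm
  have hle : ∀ j ∈ A, μ j ≤ m := by
    intro j hj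
    exact hμ (by rw [Fin.le_def]; have := (hmem j).1 hj; simp [hl]; omega)
  have hge : ∀ j ∈ Aᶜ, m ≤ μ j := by
    intro j hj
    rw [Finset.mem_compl, hmem] at hj
    exact hμ (by rw [Fin.le_def]; simp [hl]; omega)
  have hsplit : ∑ j ∈ A, e j + ∑ j ∈ Aᶜ, e j = (k : ℝ) := by
    rw [Finset.sum_add_sum_compl]; exact hsum
  rw [hAleft, ← Finset.sum_add_sum_compl A (fun j => μ j * e j)]
  have key : ∑ j ∈ A, μ j * (1 - e j) ≤ ∑ j ∈ Aᶜ, μ j * e j := by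
    calc ∑ j ∈ A, μ j * (1 - e j) ≤ ∑ j ∈ A, m * (1 - e j) := by
          refine Finset.sum_le_sum fun j hj => ?_
          exact mul_le_mul_of_nonneg_right (hle j hj) (by linarith [he1 j])
      _ = m * ((k : ℝ) - ∑ j ∈ A, e j) := by
          rw [← Finset.mul_sum, Finset.sum_sub_distrib, Finset.sum_const, nsmul_eq_mul,
            mul_one, hcard]
      _ = m * ∑ j ∈ Aᶜ, e j := by rw [← hsplit]; ring
      _ = ∑ j ∈ Aᶜ, m * e j := by rw [Finset.mul_sum]
      _ ≤ ∑ j ∈ Aᶜ, μ j * e j := by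
          refine Finset.sum_le_sum fun j hj => ?_
          exact mul_le_mul_of_nonneg_right (hge j hj) (he0 j)
  have : ∑ j ∈ A, μ j - ∑ j ∈ A, μ j * e j = ∑ j ∈ A, μ j * (1 - e j) := by
    rw [← Finset.sum_sub_distrib]; congr 1; ext j; ring
  linarith

/-- For a self-adjoint operator `T` on an `n`-dimensional real inner product space `V` and
`1 ≤ k ≤ n`, the following are equivalent: the sum of any `k` eigenvalues of `T`
(counted with multiplicity) is positive, and for every orthonormal family `y 1, …, y k` in `V`
the sum `∑ ⟪T (y i), y i⟫` is positive. -/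
theorem stmt0 {V : Type*} [NormedAddCommGroup V] [InnerProductSpace ℝ V]
    [FiniteDimensional ℝ V] {n k : ℕ} (hn : finrank ℝ V = n)
    (hk : 1 ≤ k) (hkn : k ≤ n)
    (T : V →ₗ[ℝ] V) (hT : T.IsSymmetric) :
    (∀ s : Fin k → Fin n, Function.Injective s →
        0 < ∑ i : Fin k, hT.eigenvalues hn (s i)) ↔
      (∀ y : Fin k → V, Orthonormal ℝ y →
        0 < ∑ i : Fin k, (inner ℝ (T (y i)) (y i) : ℝ)) := by
  classical
  set b := hT.eigenvectorBasis hn with hb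
  set μ := hT.eigenvalues hn with hμdef
  constructor
  · intro h y hy
    set d : Fin n → ℝ := fun j => ∑ i : Fin k, (inner ℝ (b j) (y i) : ℝ) ^ 2 with hd
    have hexpand : ∀ i, (inner ℝ (T (y i)) (y i) : ℝ) = ∑ j, μ j * (inner ℝ (b j) (y i) : ℝ) ^ 2 := by
      intro i
      rw [← b.sum_inner_mul_inner (T (y i)) (y i)]
      refine Finset.sum_congr rfl fun j _ => ?_
      have h1 : (inner ℝ (T (y i)) (b j) : ℝ) = μ j * (inner ℝ (b j) (y i) : ℝ) := by
        rw [hT (y i) (b j), hT.apply_eigenvectorBasis hn j]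
        rw [real_inner_smul_right, real_inner_comm]; norm_num; rfl
      rw [h1]; ring
    have htotal : ∑ i : Fin k, (inner ℝ (T (y i)) (y i) : ℝ) = ∑ j, μ j * d j := by
      calc ∑ i : Fin k, (inner ℝ (T (y i)) (y i) : ℝ)
          = ∑ i : Fin k, ∑ j, μ j * (inner ℝ (b j) (y i) : ℝ) ^ 2 :=
            Finset.sum_congr rfl fun i _ => hexpand i
        _ = ∑ j, ∑ i : Fin k, μ j * (inner ℝ (b j) (y i) : ℝ) ^ 2 := Finset.sum_comm
        _ = ∑ j, μ j * d j := by simp [hd, Finset.mul_sum]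
    have hd0 : ∀ j, 0 ≤ d j := fun j => Finset.sum_nonneg fun i _ => sq_nonneg _
    have hd1 : ∀ j, d j ≤ 1 := by
      intro j
      have := hy.sum_inner_products_le (b j) (s := Finset.univ)
      have hbj : ‖b j‖ = 1 := b.orthonormal.1 j
      rw [hbj] at this
      calc d j = ∑ i : Fin k, ‖(inner ℝ (y i) (b j) : ℝ)‖ ^ 2 := by
            refine Finset.sum_congr rfl fun i _ => ?_
            rw [Real.norm_eq_abs, sq_abs, real_inner_comm]
        _ ≤ 1 ^ 2 := this
        _ = 1 := one_pow 2
    have hdsum : ∑ j, d j = (k : ℝ) := by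
      rw [hd, Finset.sum_comm]
      have : ∀ i : Fin k, ∑ j, (inner ℝ (b j) (y i) : ℝ) ^ 2 = 1 := by
        intro i
        have := b.sum_inner_mul_inner (y i) (y i)
        have h1 : (inner ℝ (y i) (y i) : ℝ) = 1 := by
          rw [real_inner_self_eq_norm_sq, hy.1 i]; norm_num
        rw [h1] at this
        rw [← this]
        refine Finset.sum_congr rfl fun j _ => ?_
        rw [real_inner_comm (y i) (b j)]; ring
      simp [this]
    -- sort the eigenvalues
    set σ := Tuple.sort μ with hσ
    have hmono : Monotone (μ ∘ σ) := Tuple.monotone_sort μ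
    have hbath := bathtub_mono hkn (μ ∘ σ) hmono (d ∘ σ) (fun j => hd0 _)
      (fun j => hd1 _) ((Equiv.sum_comp σ d).trans hdsum) hk
    have hpos : 0 < ∑ i : Fin k, (μ ∘ σ) (Fin.castLE hkn i) :=
      h (fun i => σ (Fin.castLE hkn i)) fun a b hab =>
        Fin.castLE_injective hkn (σ.injective hab)
    have hperm : ∑ j, (μ ∘ σ) j * (d ∘ σ) j = ∑ j, μ j * d j :=
      Equiv.sum_comp σ (fun j => μ j * d j)
    rw [htotal, ← hperm]
    exact lt_of_lt_of_le hpos hbath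
  · intro h s hs
    have hy : Orthonormal ℝ (fun i => b (s i)) := b.orthonormal.comp s hs
    have := h (fun i => b (s i)) hy
    have heq : ∀ i : Fin k, (inner ℝ (T (b (s i))) (b (s i)) : ℝ) = μ (s i) := by
      intro i
      rw [hT.apply_eigenvectorBasis hn (s i), real_inner_smul_left]
      have : (inner ℝ (b (s i)) (b (s i)) : ℝ) = 1 := by
        rw [real_inner_self_eq_norm_sq, b.orthonormal.1 (s i)]; norm_num
      rw [this]; norm_num; rfl
    calc (0 : ℝ) < ∑ i : Fin k, (inner ℝ (T (b (s i))) (b (s i)) : ℝ) := this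
      _ = ∑ i : Fin k, μ (s i) := Finset.sum_congr rfl fun i _ => heq i
end

section
/- Let R_1 and R_2 be algebraic curvature tensors on real inner product spaces V_1 and V_2 of dimensions n_1 and n_2 respectively, and let R be the product algebraic curvature tensor on V_1 ⊕ V_2 (defined by R((x_1,x_2),(y_1,y_2))(z_1,z_2) = (R_1(x_1,y_1)z_1, R_2(x_2,y_2)z_2)). If R_1 has positive k_1-intermediate Ricci curvature and R_2 has positive k_2-intermediate Ricci curvature, then R has positive k-intermediate Ricci curvature, where k = max{k_1 + n_2, k_2 + n_1}. -/
open Module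

/-- An algebraic curvature tensor on a real inner product space: a trilinear map satisfying
the symmetries of the Riemann curvature tensor. -/
structure IsAlgCurvatureTensor {V : Type*} [NormedAddCommGroup V] [InnerProductSpace ℝ V]
    (R : V →ₗ[ℝ] V →ₗ[ℝ] V →ₗ[ℝ] V) : Prop where
  antisymm_fst : ∀ x y z w : V, (inner ℝ (R x y z) w : ℝ) = -(inner ℝ (R y x z) w : ℝ)
  antisymm_snd : ∀ x y z w : V, (inner ℝ (R x y z) w : ℝ) = -(inner ℝ (R x y w) z : ℝ)
  pair_symm : ∀ x y z w : V, (inner ℝ (R x y z) w : ℝ) = (inner ℝ (R z w x) y : ℝ)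
  bianchi : ∀ x y z : V, R x y z + R y z x + R z x y = 0

/-- `R` has positive `k`-intermediate Ricci curvature: for all orthonormal `x, y 1, …, y k`,
`∑ i, ⟪R (y i) x x, y i⟫ > 0`. -/
def PosIntermediateRic {V : Type*} [NormedAddCommGroup V] [InnerProductSpace ℝ V]
    (k : ℕ) (R : V → V → V → V) : Prop :=
  ∀ (x : V) (y : Fin k → V), Orthonormal ℝ (Fin.cons x y : Fin (k + 1) → V) →
    0 < ∑ i : Fin k, (inner ℝ (R (y i) x x) (y i) : ℝ)

open Finset
open scoped InnerProductSpace

set_option maxHeartbeats 1000000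

section Helpers

variable {V : Type*} [NormedAddCommGroup V] [InnerProductSpace ℝ V]

lemma orthonormal_cons_iff' {n : ℕ} {x : V} {y : Fin n → V} :
    Orthonormal ℝ (Fin.cons x y : Fin (n + 1) → V) ↔
      ‖x‖ = 1 ∧ Orthonormal ℝ y ∧ ∀ i, ⟪x, y i⟫_ℝ = 0 := by
  constructor
  · intro h
    refine ⟨by simpa using h.1 0, ?_, fun i => by
      simpa using h.2 (show (0 : Fin (n + 1)) ≠ i.succ from (Fin.succ_ne_zero i).symm)⟩
    have := h.comp Fin.succ (Fin.succ_injective n)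
    simpa [Function.comp] using this
  · rintro ⟨hx, hy, hxy⟩
    constructor
    · intro i
      induction i using Fin.cases with
      | zero => simpa using hx
      | succ i => simpa using hy.1 i
    · intro i j hij
      induction i using Fin.cases with
      | zero =>
        induction j using Fin.cases with
        | zero => exact absurd rfl hij
        | succ j => simpa using hxy j
      | succ i =>
        induction j using Fin.cases with
        | zero => simpa [real_inner_comm] using hxy i
        | succ j =>
          have : i ≠ j := fun h => hij (by rw [h])
          simpa using hy.2 this

lemma core_lemma {n k₁ : ℕ} (hn : finrank ℝ V = n) (hk₁ : 1 ≤ k₁) (hk₁n : k₁ + 1 ≤ n)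
    (R : V →ₗ[ℝ] V →ₗ[ℝ] V →ₗ[ℝ] V)
    (hpos : PosIntermediateRic k₁ fun x y z => R x y z)
    {a : V} (ha : ‖a‖ = 1) {k : ℕ} (w : Fin k → V)
    (hwa : ∀ i, ⟪a, w i⟫_ℝ = 0)
    (hbes : ∀ e : V, ⟪a, e⟫_ℝ = 0 → ∑ i, ⟪w i, e⟫_ℝ ^ 2 ≤ ‖e‖ ^ 2)
    (htr : (k₁ : ℝ) ≤ ∑ i, ‖w i‖ ^ 2) :
    0 < ∑ i, ⟪R (w i) a a, w i⟫_ℝ := by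
  classical
  have ha0 : a ≠ 0 := fun h => by simp [h] at ha
  haveI : FiniteDimensional ℝ V := Module.finite_of_finrank_pos (by rw [hn]; omega)
  haveI : Fact (finrank ℝ V = (n - 1) + 1) := ⟨by omega⟩
  have hWrank : finrank ℝ ((ℝ ∙ a)ᗮ : Submodule ℝ V) = n - 1 :=
    Submodule.finrank_orthogonal_span_singleton ha0
  have hwmem : ∀ i, w i ∈ (ℝ ∙ a)ᗮ := fun i =>
    Submodule.mem_orthogonal_singleton_iff_inner_right.2 (hwa i)
  set w' : Fin k → ((ℝ ∙ a)ᗮ : Submodule ℝ V) := fun i => ⟨w i, hwmem i⟩ with hw'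
  set T : ((ℝ ∙ a)ᗮ : Submodule ℝ V) →ₗ[ℝ] ((ℝ ∙ a)ᗮ : Submodule ℝ V) :=
    { toFun := fun e => ∑ i, ⟪w' i, e⟫_ℝ • w' i
      map_add' := by
        intro e f
        simp [inner_add_right, add_smul, Finset.sum_add_distrib]
      map_smul' := by
        intro c e
        simp [inner_smul_right, smul_smul, Finset.smul_sum] } with hT
  have hTapp : ∀ e, T e = ∑ i, ⟪w' i, e⟫_ℝ • w' i := fun _ => rfl
  have hTsymm : T.IsSymmetric := by
    intro e f
    simp only [hTapp, sum_inner, inner_sum, real_inner_smul_left, real_inner_smul_right]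
    refine Finset.sum_congr rfl fun i _ => ?_
    rw [real_inner_comm (w' i) e]
    ring
  set f := hTsymm.eigenvectorBasis hWrank with hf
  set μ := hTsymm.eigenvalues hWrank with hμ
  have happly : ∀ j, T (f j) = μ j • f j := fun j => by
    simp only [hf, hμ]
    exact_mod_cast hTsymm.apply_eigenvectorBasis hWrank j
  have horthof : Orthonormal ℝ (fun j => (f j : V)) := by
    have h1 := f.orthonormal
    rw [orthonormal_iff_ite] at h1 ⊢
    intro j l
    rw [← Submodule.coe_inner]
    exact h1 j l
  have hfa : ∀ j, ⟪a, (f j : V)⟫_ℝ = 0 := fun j =>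
    Submodule.mem_orthogonal_singleton_iff_inner_right.1 (f j).2
  have hcoef : ∀ j l, ∑ i, ⟪w i, (f j : V)⟫_ℝ * ⟪w i, (f l : V)⟫_ℝ
      = if j = l then μ j else 0 := by
    intro j l
    have h1 : ⟪T (f j), f l⟫_ℝ = ∑ i, ⟪w' i, f j⟫_ℝ * ⟪w' i, f l⟫_ℝ := by
      simp [hTapp, sum_inner, real_inner_smul_left]
    have h2 : ⟪T (f j), f l⟫_ℝ = if j = l then μ j else 0 := by
      rw [happly, real_inner_smul_left]
      rcases eq_or_ne j l with h | h
      · subst h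
        have hone : ⟪f j, f j⟫_ℝ = 1 := by
          rw [real_inner_self_eq_norm_sq, f.orthonormal.1 j]; norm_num
        rw [hone, mul_one, if_pos rfl]
      · rw [f.orthonormal.2 h, mul_zero, if_neg h]
    rw [← h2, h1]
    exact Finset.sum_congr rfl fun i _ => by rw [Submodule.coe_inner, Submodule.coe_inner]
  have hμ0 : ∀ j, 0 ≤ μ j := by
    intro j
    have h := hcoef j j
    rw [if_pos rfl] at h
    rw [← h]
    exact Finset.sum_nonneg fun i _ => mul_self_nonneg _
  have hnormf : ∀ j, ‖(f j : V)‖ = 1 := fun j => horthof.1 j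
  have hμ1 : ∀ j, μ j ≤ 1 := by
    intro j
    have hb := hbes (f j : V) (hfa j)
    have h := hcoef j j
    rw [if_pos rfl] at h
    calc μ j = ∑ i, ⟪w i, (f j : V)⟫_ℝ ^ 2 := by
            rw [← h]; exact Finset.sum_congr rfl fun i _ => (sq _).symm
      _ ≤ ‖(f j : V)‖ ^ 2 := hb
      _ = 1 := by rw [hnormf]; norm_num
  have hpar : ∀ i, ∑ j, ⟪w i, (f j : V)⟫_ℝ ^ 2 = ‖w i‖ ^ 2 := by
    intro i
    have h := f.sum_inner_mul_inner (w' i) (w' i)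
    calc ∑ j, ⟪w i, (f j : V)⟫_ℝ ^ 2
        = ∑ j, ⟪w' i, f j⟫_ℝ * ⟪f j, w' i⟫_ℝ := by
          refine Finset.sum_congr rfl fun j _ => ?_
          have e1 : ⟪w' i, f j⟫_ℝ = ⟪w i, (f j : V)⟫_ℝ := Submodule.coe_inner _ _ _
          have e2 : ⟪f j, w' i⟫_ℝ = ⟪w i, (f j : V)⟫_ℝ := by
            rw [Submodule.coe_inner]; exact real_inner_comm _ _
          rw [sq, e1, e2]
      _ = ⟪w' i, w' i⟫_ℝ := h
      _ = ‖w i‖ ^ 2 := by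
          have e3 : ⟪w' i, w' i⟫_ℝ = ⟪w i, w i⟫_ℝ := Submodule.coe_inner _ _ _
          rw [e3, real_inner_self_eq_norm_sq]
  have htrace : (k₁ : ℝ) ≤ ∑ j, μ j := by
    calc (k₁ : ℝ) ≤ ∑ i, ‖w i‖ ^ 2 := htr
      _ = ∑ i, ∑ j, ⟪w i, (f j : V)⟫_ℝ ^ 2 :=
          (Finset.sum_congr rfl fun i _ => (hpar i).symm)
      _ = ∑ j, ∑ i, ⟪w i, (f j : V)⟫_ℝ ^ 2 := Finset.sum_comm
      _ = ∑ j, μ j := by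
          refine Finset.sum_congr rfl fun j _ => ?_
          have h := hcoef j j
          rw [if_pos rfl] at h
          rw [← h]
          exact Finset.sum_congr rfl fun i _ => (sq _)
  set q : Fin (n - 1) → ℝ := fun j => ⟪R (f j : V) a a, (f j : V)⟫_ℝ with hq
  have hmain : ∑ i, ⟪R (w i) a a, w i⟫_ℝ = ∑ j, μ j * q j := by
    have hrepr : ∀ i, w i = ∑ j, ⟪w i, (f j : V)⟫_ℝ • (f j : V) := by
      intro i
      have h := f.sum_repr (w' i)
      have h2 := congrArg (Subtype.val : _ → V) h
      calc w i = ((∑ j, f.repr (w' i) j • f j : _) : V) := h2.symm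
        _ = ∑ j, ⟪w i, (f j : V)⟫_ℝ • (f j : V) := by
            push_cast
            refine Finset.sum_congr rfl fun j _ => ?_
            rw [f.repr_apply_apply, Submodule.coe_inner, real_inner_comm]
    have hterm : ∀ i, ⟪R (w i) a a, w i⟫_ℝ
        = ∑ j, ∑ l, (⟪w i, (f j : V)⟫_ℝ * ⟪w i, (f l : V)⟫_ℝ)
            * ⟪R (f j : V) a a, (f l : V)⟫_ℝ := by
      intro i
      conv_lhs => rw [hrepr i]
      rw [map_sum, LinearMap.sum_apply, LinearMap.sum_apply, sum_inner]
      refine Finset.sum_congr rfl fun j _ => ?_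
      rw [map_smul, LinearMap.smul_apply, LinearMap.smul_apply, real_inner_smul_left,
        inner_sum]
      rw [Finset.mul_sum]
      refine Finset.sum_congr rfl fun l _ => ?_
      rw [real_inner_smul_right]
      ring
    calc ∑ i, ⟪R (w i) a a, w i⟫_ℝ
        = ∑ i, ∑ j, ∑ l, (⟪w i, (f j : V)⟫_ℝ * ⟪w i, (f l : V)⟫_ℝ)
            * ⟪R (f j : V) a a, (f l : V)⟫_ℝ := Finset.sum_congr rfl fun i _ => hterm i
      _ = ∑ j, ∑ l, ∑ i, (⟪w i, (f j : V)⟫_ℝ * ⟪w i, (f l : V)⟫_ℝ)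
            * ⟪R (f j : V) a a, (f l : V)⟫_ℝ := by
          rw [Finset.sum_comm]
          exact Finset.sum_congr rfl fun j _ => Finset.sum_comm
      _ = ∑ j, ∑ l, (if j = l then μ j else 0) * ⟪R (f j : V) a a, (f l : V)⟫_ℝ := by
          refine Finset.sum_congr rfl fun j _ => Finset.sum_congr rfl fun l _ => ?_
          rw [← Finset.sum_mul, hcoef]
      _ = ∑ j, μ j * q j := by
          refine Finset.sum_congr rfl fun j _ => ?_
          rw [Finset.sum_eq_single j]
          · simp [hq]
          · intro l _ hl
            simp [Ne.symm hl]
          · simp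
  have hsub : ∀ S : Finset (Fin (n - 1)), S.card = k₁ → 0 < ∑ j ∈ S, q j := by
    intro S hS
    set e := S.orderIsoOfFin hS with he
    set y : Fin k₁ → V := fun t => (f (e t) : V) with hy
    have hyo : Orthonormal ℝ y := by
      refine horthof.comp (fun t => ((e t : S) : Fin (n - 1))) ?_
      intro s t h
      exact e.injective (Subtype.ext h)
    have hcons : Orthonormal ℝ (Fin.cons a y : Fin (k₁ + 1) → V) :=
      orthonormal_cons_iff'.2 ⟨ha, hyo, fun t => hfa _⟩
    have hp := hpos a y hcons
    rw [← Finset.sum_coe_sort S q, ← Equiv.sum_comp e.toEquiv (fun s : S => q s)]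
    exact hp
  -- LP argument
  set σ := Tuple.sort q with hσ
  have hmono : Monotone (q ∘ σ) := Tuple.monotone_sort q
  have hk₁m : k₁ ≤ n - 1 := by omega
  set emb : Fin k₁ → Fin (n - 1) := Fin.castLE hk₁m with hemb
  have hembinj : Function.Injective emb := Fin.castLE_injective hk₁m
  have hS0 : 0 < ∑ t, q (σ (emb t)) := by
    have hcard : (Finset.univ.map ⟨fun t => σ (emb t), σ.injective.comp hembinj⟩).card = k₁ := by
      simp
    have h := hsub _ hcard
    rwa [Finset.sum_map] at h
  set jc : Fin (n - 1) := emb ⟨k₁ - 1, by omega⟩ with hjc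
  have hjcval : (jc : ℕ) = k₁ - 1 := rfl
  have hc : 0 < q (σ jc) := by
    by_contra hle
    push_neg at hle
    have hb : ∀ t : Fin k₁, q (σ (emb t)) ≤ q (σ jc) := by
      intro t
      refine hmono ?_
      rw [Fin.le_def]
      show (t : ℕ) ≤ (jc : ℕ)
      rw [hjcval]
      omega
    have h2 : ∑ t : Fin k₁, q (σ (emb t)) ≤ ∑ _t : Fin k₁, q (σ jc) :=
      Finset.sum_le_sum fun t _ => hb t
    rw [Finset.sum_const, Finset.card_univ, Fintype.card_fin, nsmul_eq_mul] at h2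
    have h3 : (k₁ : ℝ) * q (σ jc) ≤ 0 :=
      mul_nonpos_of_nonneg_of_nonpos (by positivity) hle
    linarith
  set ν : Fin (n - 1) → ℝ := fun j => μ (σ j) with hν
  set d : Fin (n - 1) → ℝ := fun j => if (j : ℕ) < k₁ then 1 else 0 with hd
  have hsum_ν : (k₁ : ℝ) ≤ ∑ j, ν j := by
    rw [hν]
    rw [Equiv.sum_comp σ μ]
    exact htrace
  have hfilter : Finset.univ.filter (fun j : Fin (n - 1) => (j : ℕ) < k₁)
      = Finset.univ.map ⟨emb, hembinj⟩ := by
    ext j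
    constructor
    · intro hj
      rw [Finset.mem_filter] at hj
      rw [Finset.mem_map]
      exact ⟨⟨(j : ℕ), hj.2⟩, Finset.mem_univ _, Fin.ext rfl⟩
    · intro hj
      rw [Finset.mem_map] at hj
      obtain ⟨t, -, rfl⟩ := hj
      rw [Finset.mem_filter]
      refine ⟨Finset.mem_univ _, ?_⟩
      exact t.isLt
  have hsum_d : ∑ j, d j = (k₁ : ℝ) := by
    rw [hd]
    rw [Finset.sum_boole, hfilter, Finset.card_map, Finset.card_univ, Fintype.card_fin]
  have hdr : ∑ j, d j * q (σ j) = ∑ t, q (σ (emb t)) := by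
    rw [hd]
    simp only [ite_mul, one_mul, zero_mul]
    rw [← Finset.sum_filter, hfilter, Finset.sum_map]
    rfl
  have hnn : 0 ≤ ∑ j, (ν j - d j) * (q (σ j) - q (σ jc)) := by
    refine Finset.sum_nonneg fun j _ => ?_
    by_cases h : (j : ℕ) < k₁
    · have h1 : ν j ≤ 1 := hμ1 _
      have h2 : q (σ j) ≤ q (σ jc) := by
        refine hmono ?_
        rw [Fin.le_def, hjcval]
        omega
      rw [hd]
      simp only [if_pos h]
      nlinarith
    · have h1 : 0 ≤ ν j := hμ0 _
      have h2 : q (σ jc) ≤ q (σ j) := by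
        refine hmono ?_
        rw [Fin.le_def, hjcval]
        omega
      rw [hd]
      simp only [if_neg h]
      nlinarith
  have hid : ∑ j, ν j * q (σ j)
      = (∑ j, (ν j - d j) * (q (σ j) - q (σ jc))) + (∑ j, d j * q (σ j))
        + q (σ jc) * (∑ j, ν j) - q (σ jc) * (∑ j, d j) := by
    rw [Finset.mul_sum, Finset.mul_sum, ← Finset.sum_add_distrib, ← Finset.sum_add_distrib,
      ← Finset.sum_sub_distrib]
    refine Finset.sum_congr rfl fun j _ => ?_
    ring
  have hfin : 0 < ∑ j, ν j * q (σ j) := by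
    rw [hid, hdr, hsum_d]
    have h4 : 0 ≤ q (σ jc) * (∑ j, ν j) - q (σ jc) * (k₁ : ℝ) := by
      have := mul_le_mul_of_nonneg_left hsum_ν hc.le
      linarith
    linarith
  rw [hmain]
  have heq : ∑ j, ν j * q (σ j) = ∑ j, μ j * q j := by
    rw [hν]
    exact Equiv.sum_comp σ fun j => μ j * q j
  rw [← heq]
  exact hfin

lemma side_lemma {n k₁ : ℕ} (hn : finrank ℝ V = n) (hk₁ : 1 ≤ k₁) (hk₁n : k₁ + 1 ≤ n)
    (R : V →ₗ[ℝ] V →ₗ[ℝ] V →ₗ[ℝ] V) (hRt : IsAlgCurvatureTensor R)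
    (hpos : PosIntermediateRic k₁ fun x y z => R x y z)
    {a : V} (ha0 : a ≠ 0) {k : ℕ} (u : Fin k → V)
    (hbes : ∀ e : V, ∑ i, ⟪u i, e⟫_ℝ ^ 2 ≤ ‖e‖ ^ 2)
    (hbesa : ∑ i, ⟪u i, a⟫_ℝ ^ 2 ≤ (1 - ‖a‖ ^ 2) * ‖a‖ ^ 2)
    (htr : (k₁ : ℝ) + 1 - ‖a‖ ^ 2 ≤ ∑ i, ‖u i‖ ^ 2) :
    0 < ∑ i, ⟪R (u i) a a, u i⟫_ℝ := by
  have hna : 0 < ‖a‖ := norm_pos_iff.2 ha0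
  obtain ⟨ahat, hahatdef⟩ : ∃ z : V, z = ‖a‖⁻¹ • a := ⟨_, rfl⟩
  have hahat1 : ‖ahat‖ = 1 := by
    rw [hahatdef, norm_smul, norm_inv, norm_norm, inv_mul_cancel₀ hna.ne']
  have hzero : ∀ z : V, R ahat ahat z = 0 := by
    intro z
    have h := hRt.antisymm_fst ahat ahat z (R ahat ahat z)
    have h2 : ⟪R ahat ahat z, R ahat ahat z⟫_ℝ = 0 := by linarith
    exact inner_self_eq_zero.1 h2
  have hinner_a : ∀ p : V, ⟪R p ahat ahat, ahat⟫_ℝ = 0 := by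
    intro p
    have := hRt.antisymm_snd p ahat ahat ahat
    linarith
  obtain ⟨c, hcdef⟩ : ∃ c : Fin k → ℝ, c = fun i => ⟪ahat, u i⟫_ℝ := ⟨_, rfl⟩
  obtain ⟨w, hwdef⟩ : ∃ w : Fin k → V, w = fun i => u i - c i • ahat := ⟨_, rfl⟩
  have hq : ∀ i, ⟪R (u i) a a, u i⟫_ℝ = ‖a‖ ^ 2 * ⟪R (w i) ahat ahat, w i⟫_ℝ := by
    intro i
    have h1 : a = ‖a‖ • ahat := by
      rw [hahatdef, smul_smul, mul_inv_cancel₀ hna.ne', one_smul]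
    have h2 : ⟪R (u i) a a, u i⟫_ℝ = ‖a‖ ^ 2 * ⟪R (u i) ahat ahat, u i⟫_ℝ := by
      conv_lhs => rw [h1]
      simp only [map_smul, LinearMap.smul_apply, real_inner_smul_left]
      ring
    have h3 : ⟪R (u i) ahat ahat, u i⟫_ℝ = ⟪R (w i) ahat ahat, w i⟫_ℝ := by
      have hu : u i = w i + c i • ahat := by simp only [hwdef]; abel
      conv_lhs => rw [hu]
      simp only [map_add, map_smul, LinearMap.add_apply, LinearMap.smul_apply, hzero,
        smul_zero, add_zero, inner_add_right, real_inner_smul_right, hinner_a, mul_zero]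
    rw [h2, h3]
  have hwa : ∀ i, ⟪ahat, w i⟫_ℝ = 0 := by
    intro i
    simp only [hwdef, inner_sub_right, real_inner_smul_right]
    rw [real_inner_self_eq_norm_sq, hahat1]
    simp only [hcdef]
    ring
  have hbes' : ∀ e : V, ⟪ahat, e⟫_ℝ = 0 → ∑ i, ⟪w i, e⟫_ℝ ^ 2 ≤ ‖e‖ ^ 2 := by
    intro e he
    have hwe : ∀ i, ⟪w i, e⟫_ℝ = ⟪u i, e⟫_ℝ := by
      intro i
      simp only [hwdef, inner_sub_left, real_inner_smul_left, he, mul_zero, sub_zero]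
    rw [Finset.sum_congr rfl fun i _ => by rw [hwe i]]
    exact hbes e
  have hcc : ∀ i, c i ^ 2 = ‖a‖⁻¹ ^ 2 * ⟪u i, a⟫_ℝ ^ 2 := by
    intro i
    simp only [hcdef, hahatdef, real_inner_smul_left]
    rw [real_inner_comm]
    ring
  have hcsum : ∑ i, c i ^ 2 ≤ 1 - ‖a‖ ^ 2 := by
    have h1 : ∑ i, c i ^ 2 = ‖a‖⁻¹ ^ 2 * ∑ i, ⟪u i, a⟫_ℝ ^ 2 := by
      rw [Finset.mul_sum]
      exact Finset.sum_congr rfl fun i _ => hcc i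
    rw [h1]
    have h2 : ‖a‖⁻¹ ^ 2 * ∑ i, ⟪u i, a⟫_ℝ ^ 2 ≤ ‖a‖⁻¹ ^ 2 * ((1 - ‖a‖ ^ 2) * ‖a‖ ^ 2) :=
      mul_le_mul_of_nonneg_left hbesa (by positivity)
    have h3 : ‖a‖⁻¹ ^ 2 * ((1 - ‖a‖ ^ 2) * ‖a‖ ^ 2) = 1 - ‖a‖ ^ 2 := by
      field_simp
    linarith
  have hwnorm : ∀ i, ‖w i‖ ^ 2 = ‖u i‖ ^ 2 - c i ^ 2 := by
    intro i
    have hci : ⟪u i, ahat⟫_ℝ = c i := by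
      simp only [hcdef]
      exact real_inner_comm _ _
    simp only [hwdef]
    rw [norm_sub_sq_real, real_inner_smul_right, hci, norm_smul, hahat1, mul_one,
      Real.norm_eq_abs, sq_abs]
    ring
  have htr' : (k₁ : ℝ) ≤ ∑ i, ‖w i‖ ^ 2 := by
    have h1 : ∑ i, ‖w i‖ ^ 2 = ∑ i, ‖u i‖ ^ 2 - ∑ i, c i ^ 2 := by
      rw [← Finset.sum_sub_distrib]
      exact Finset.sum_congr rfl fun i _ => hwnorm i
    rw [h1]
    linarith
  have hcore := core_lemma hn hk₁ hk₁n R hpos hahat1 w hwa hbes' htr'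
  have hsum : ∑ i, ⟪R (u i) a a, u i⟫_ℝ = ‖a‖ ^ 2 * ∑ i, ⟪R (w i) ahat ahat, w i⟫_ℝ := by
    rw [Finset.mul_sum]
    exact Finset.sum_congr rfl fun i _ => hq i
  rw [hsum]
  exact mul_pos (by positivity) hcore

end Helpers

/-- If `R₁` on `V₁` has positive `k₁`-intermediate Ricci curvature and `R₂` on `V₂` has positive
`k₂`-intermediate Ricci curvature, then the product curvature tensor on `V₁ ⊕ V₂` has positive
`k`-intermediate Ricci curvature for `k = max (k₁ + n₂) (k₂ + n₁)`. -/
theorem stmt3 {V₁ V₂ : Type*} [NormedAddCommGroup V₁] [InnerProductSpace ℝ V₁]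
    [NormedAddCommGroup V₂] [InnerProductSpace ℝ V₂]
    {n₁ n₂ k₁ k₂ : ℕ} (h₁ : finrank ℝ V₁ = n₁) (h₂ : finrank ℝ V₂ = n₂)
    (hk₁ : 1 ≤ k₁) (hk₁n : k₁ + 1 ≤ n₁) (hk₂ : 1 ≤ k₂) (hk₂n : k₂ + 1 ≤ n₂)
    (R₁ : V₁ →ₗ[ℝ] V₁ →ₗ[ℝ] V₁ →ₗ[ℝ] V₁) (hR₁ : IsAlgCurvatureTensor R₁)
    (R₂ : V₂ →ₗ[ℝ] V₂ →ₗ[ℝ] V₂ →ₗ[ℝ] V₂) (hR₂ : IsAlgCurvatureTensor R₂)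
    (hpos₁ : PosIntermediateRic k₁ (fun x y z => R₁ x y z))
    (hpos₂ : PosIntermediateRic k₂ (fun x y z => R₂ x y z))
    (R : WithLp 2 (V₁ × V₂) → WithLp 2 (V₁ × V₂) → WithLp 2 (V₁ × V₂) → WithLp 2 (V₁ × V₂))
    (hR : ∀ x y z : WithLp 2 (V₁ × V₂),
      R x y z = (WithLp.equiv 2 (V₁ × V₂)).symm
        (R₁ (WithLp.equiv 2 (V₁ × V₂) x).1 (WithLp.equiv 2 (V₁ × V₂) y).1
            (WithLp.equiv 2 (V₁ × V₂) z).1,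
         R₂ (WithLp.equiv 2 (V₁ × V₂) x).2 (WithLp.equiv 2 (V₁ × V₂) y).2
            (WithLp.equiv 2 (V₁ × V₂) z).2)) :
    PosIntermediateRic (max (k₁ + n₂) (k₂ + n₁)) R := by
  classical
  set K := max (k₁ + n₂) (k₂ + n₁) with hKdef
  have hK1 : k₁ + n₂ ≤ K := le_max_left _ _
  have hK2 : k₂ + n₁ ≤ K := le_max_right _ _
  intro x y horth
  have horth' := horth
  rw [orthonormal_cons_iff'] at horth
  obtain ⟨hx1, hy, hxy⟩ := horth
  set a : V₁ := (WithLp.equiv 2 (V₁ × V₂) x).1 with hadef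
  set b : V₂ := (WithLp.equiv 2 (V₁ × V₂) x).2 with hbdef
  set u : Fin K → V₁ := fun i => (WithLp.equiv 2 (V₁ × V₂) (y i)).1 with hudef
  set v : Fin K → V₂ := fun i => (WithLp.equiv 2 (V₁ × V₂) (y i)).2 with hvdef
  have hinner : ∀ p q : WithLp 2 (V₁ × V₂),
      ⟪p, q⟫_ℝ = ⟪(WithLp.equiv 2 (V₁ × V₂) p).1, (WithLp.equiv 2 (V₁ × V₂) q).1⟫_ℝ
        + ⟪(WithLp.equiv 2 (V₁ × V₂) p).2, (WithLp.equiv 2 (V₁ × V₂) q).2⟫_ℝ :=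
    fun p q => rfl
  -- inner products with embedded vectors
  have hinny1 : ∀ (i : Fin K) (e : V₁),
      ⟪y i, (WithLp.equiv 2 (V₁ × V₂)).symm (e, 0)⟫_ℝ = ⟪u i, e⟫_ℝ := by
    intro i e
    rw [hinner, hudef]
    simp
  have hinny2 : ∀ (i : Fin K) (e : V₂),
      ⟪y i, (WithLp.equiv 2 (V₁ × V₂)).symm (0, e)⟫_ℝ = ⟪v i, e⟫_ℝ := by
    intro i e
    rw [hinner, hvdef]
    simp
  have hinnx1 : ∀ e : V₁,
      ⟪x, (WithLp.equiv 2 (V₁ × V₂)).symm (e, 0)⟫_ℝ = ⟪a, e⟫_ℝ := by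
    intro e
    rw [hinner, hadef]
    simp
  have hinnx2 : ∀ e : V₂,
      ⟪x, (WithLp.equiv 2 (V₁ × V₂)).symm (0, e)⟫_ℝ = ⟪b, e⟫_ℝ := by
    intro e
    rw [hinner, hbdef]
    simp
  have hnz1 : ∀ e : V₁, ‖(WithLp.equiv 2 (V₁ × V₂)).symm (e, 0)‖ = ‖e‖ :=
    fun e => WithLp.norm_toLp_fst 2 V₁ V₂ e
  have hnz2 : ∀ e : V₂, ‖(WithLp.equiv 2 (V₁ × V₂)).symm (0, e)‖ = ‖e‖ :=
    fun e => WithLp.norm_toLp_snd 2 V₁ V₂ e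
  -- Bessel over the y family
  have hbes1 : ∀ e : V₁, ∑ i, ⟪u i, e⟫_ℝ ^ 2 ≤ ‖e‖ ^ 2 := by
    intro e
    have h := hy.sum_inner_products_le (x := (WithLp.equiv 2 (V₁ × V₂)).symm (e, 0))
      (s := Finset.univ)
    rw [hnz1] at h
    calc ∑ i, ⟪u i, e⟫_ℝ ^ 2
        = ∑ i, ‖⟪y i, (WithLp.equiv 2 (V₁ × V₂)).symm (e, 0)⟫_ℝ‖ ^ 2 := by
          refine Finset.sum_congr rfl fun i _ => ?_
          rw [hinny1, Real.norm_eq_abs, sq_abs]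
      _ ≤ ‖e‖ ^ 2 := h
  have hbes2 : ∀ e : V₂, ∑ i, ⟪v i, e⟫_ℝ ^ 2 ≤ ‖e‖ ^ 2 := by
    intro e
    have h := hy.sum_inner_products_le (x := (WithLp.equiv 2 (V₁ × V₂)).symm (0, e))
      (s := Finset.univ)
    rw [hnz2] at h
    calc ∑ i, ⟪v i, e⟫_ℝ ^ 2
        = ∑ i, ‖⟪y i, (WithLp.equiv 2 (V₁ × V₂)).symm (0, e)⟫_ℝ‖ ^ 2 := by
          refine Finset.sum_congr rfl fun i _ => ?_
          rw [hinny2, Real.norm_eq_abs, sq_abs]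
      _ ≤ ‖e‖ ^ 2 := h
  -- Bessel over the cons family
  have hbes_cons : ∀ z : WithLp 2 (V₁ × V₂),
      ⟪x, z⟫_ℝ ^ 2 + ∑ i, ⟪y i, z⟫_ℝ ^ 2 ≤ ‖z‖ ^ 2 := by
    intro z
    have h := horth'.sum_inner_products_le (x := z) (s := Finset.univ)
    rw [Fin.sum_univ_succ] at h
    simpa [Real.norm_eq_abs, sq_abs] using h
  have hxa : ‖a‖ ^ 2 + ‖b‖ ^ 2 = 1 := by
    have h : ⟪x, x⟫_ℝ = 1 := by
      rw [real_inner_self_eq_norm_sq, hx1]; norm_num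
    rw [hinner, ← hadef, ← hbdef, real_inner_self_eq_norm_sq, real_inner_self_eq_norm_sq] at h
    exact h
  have hsumuv : ∑ i, ‖u i‖ ^ 2 + ∑ i, ‖v i‖ ^ 2 = (K : ℝ) := by
    rw [← Finset.sum_add_distrib]
    have h : ∀ i, ‖u i‖ ^ 2 + ‖v i‖ ^ 2 = 1 := by
      intro i
      have h2 : ⟪y i, y i⟫_ℝ = 1 := by
        rw [real_inner_self_eq_norm_sq, hy.1 i]; norm_num
      rw [hinner, real_inner_self_eq_norm_sq, real_inner_self_eq_norm_sq] at h2
      exact h2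
    rw [Finset.sum_congr rfl fun i _ => h i]
    simp
  have hbesa1 : ∑ i, ⟪u i, a⟫_ℝ ^ 2 ≤ (1 - ‖a‖ ^ 2) * ‖a‖ ^ 2 := by
    have h := hbes_cons ((WithLp.equiv 2 (V₁ × V₂)).symm (a, 0))
    rw [hinnx1, real_inner_self_eq_norm_sq, hnz1] at h
    rw [Finset.sum_congr rfl fun i _ => by rw [hinny1 i a]] at h
    nlinarith [h]
  have hbesa2 : ∑ i, ⟪v i, b⟫_ℝ ^ 2 ≤ (1 - ‖b‖ ^ 2) * ‖b‖ ^ 2 := by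
    have h := hbes_cons ((WithLp.equiv 2 (V₁ × V₂)).symm (0, b))
    rw [hinnx2, real_inner_self_eq_norm_sq, hnz2] at h
    rw [Finset.sum_congr rfl fun i _ => by rw [hinny2 i b]] at h
    nlinarith [h]
  -- bound on the total mass in each factor
  haveI : FiniteDimensional ℝ V₁ := Module.finite_of_finrank_pos (by rw [h₁]; omega)
  haveI : FiniteDimensional ℝ V₂ := Module.finite_of_finrank_pos (by rw [h₂]; omega)
  have hpar1 : ∀ z : V₁, ∑ j, ⟪z, stdOrthonormalBasis ℝ V₁ j⟫_ℝ ^ 2 = ‖z‖ ^ 2 := by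
    intro z
    have h := (stdOrthonormalBasis ℝ V₁).sum_inner_mul_inner z z
    rw [real_inner_self_eq_norm_sq] at h
    rw [← h]
    refine Finset.sum_congr rfl fun j _ => ?_
    rw [sq, real_inner_comm (stdOrthonormalBasis ℝ V₁ j) z]
  have hpar2 : ∀ z : V₂, ∑ j, ⟪z, stdOrthonormalBasis ℝ V₂ j⟫_ℝ ^ 2 = ‖z‖ ^ 2 := by
    intro z
    have h := (stdOrthonormalBasis ℝ V₂).sum_inner_mul_inner z z
    rw [real_inner_self_eq_norm_sq] at h
    rw [← h]
    refine Finset.sum_congr rfl fun j _ => ?_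
    rw [sq, real_inner_comm (stdOrthonormalBasis ℝ V₂ j) z]
  have hvbound : ∑ i, ‖v i‖ ^ 2 ≤ (n₂ : ℝ) - ‖b‖ ^ 2 := by
    calc ∑ i, ‖v i‖ ^ 2 = ∑ i, ∑ j, ⟪v i, stdOrthonormalBasis ℝ V₂ j⟫_ℝ ^ 2 :=
          Finset.sum_congr rfl fun i _ => (hpar2 (v i)).symm
      _ = ∑ j, ∑ i, ⟪v i, stdOrthonormalBasis ℝ V₂ j⟫_ℝ ^ 2 := Finset.sum_comm
      _ ≤ ∑ j, (1 - ⟪b, stdOrthonormalBasis ℝ V₂ j⟫_ℝ ^ 2) := by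
          refine Finset.sum_le_sum fun j _ => ?_
          have h := hbes_cons ((WithLp.equiv 2 (V₁ × V₂)).symm (0, stdOrthonormalBasis ℝ V₂ j))
          rw [hinnx2, hnz2] at h
          rw [Finset.sum_congr rfl fun i _ => by
            rw [hinny2 i (stdOrthonormalBasis ℝ V₂ j)]] at h
          have hg : ‖stdOrthonormalBasis ℝ V₂ j‖ = 1 := (stdOrthonormalBasis ℝ V₂).orthonormal.1 j
          rw [hg] at h
          linarith [h]
      _ = (n₂ : ℝ) - ‖b‖ ^ 2 := by
          rw [Finset.sum_sub_distrib, Finset.sum_const, Finset.card_univ, Fintype.card_fin,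
            hpar2 b, h₂, nsmul_eq_mul, mul_one]
  have hubound : ∑ i, ‖u i‖ ^ 2 ≤ (n₁ : ℝ) - ‖a‖ ^ 2 := by
    calc ∑ i, ‖u i‖ ^ 2 = ∑ i, ∑ j, ⟪u i, stdOrthonormalBasis ℝ V₁ j⟫_ℝ ^ 2 :=
          Finset.sum_congr rfl fun i _ => (hpar1 (u i)).symm
      _ = ∑ j, ∑ i, ⟪u i, stdOrthonormalBasis ℝ V₁ j⟫_ℝ ^ 2 := Finset.sum_comm
      _ ≤ ∑ j, (1 - ⟪a, stdOrthonormalBasis ℝ V₁ j⟫_ℝ ^ 2) := by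
          refine Finset.sum_le_sum fun j _ => ?_
          have h := hbes_cons ((WithLp.equiv 2 (V₁ × V₂)).symm (stdOrthonormalBasis ℝ V₁ j, 0))
          rw [hinnx1, hnz1] at h
          rw [Finset.sum_congr rfl fun i _ => by
            rw [hinny1 i (stdOrthonormalBasis ℝ V₁ j)]] at h
          have hg : ‖stdOrthonormalBasis ℝ V₁ j‖ = 1 := (stdOrthonormalBasis ℝ V₁).orthonormal.1 j
          rw [hg] at h
          linarith [h]
      _ = (n₁ : ℝ) - ‖a‖ ^ 2 := by
          rw [Finset.sum_sub_distrib, Finset.sum_const, Finset.card_univ, Fintype.card_fin,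
            hpar1 a, h₁, nsmul_eq_mul, mul_one]
  -- the two side estimates
  have hKr1 : (k₁ : ℝ) + n₂ ≤ (K : ℝ) := by exact_mod_cast hK1
  have hKr2 : (k₂ : ℝ) + n₁ ≤ (K : ℝ) := by exact_mod_cast hK2
  have hS1 : a ≠ 0 → 0 < ∑ i, ⟪R₁ (u i) a a, u i⟫_ℝ := by
    intro ha0
    refine side_lemma h₁ hk₁ hk₁n R₁ hR₁ hpos₁ ha0 u hbes1 hbesa1 ?_
    linarith
  have hS2 : b ≠ 0 → 0 < ∑ i, ⟪R₂ (v i) b b, v i⟫_ℝ := by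
    intro hb0
    refine side_lemma h₂ hk₂ hk₂n R₂ hR₂ hpos₂ hb0 v hbes2 hbesa2 ?_
    linarith
  have hterm : ∀ i, ⟪R (y i) x x, y i⟫_ℝ
      = ⟪R₁ (u i) a a, u i⟫_ℝ + ⟪R₂ (v i) b b, v i⟫_ℝ := by
    intro i
    rw [hR, hinner]
    rfl
  rw [Finset.sum_congr rfl fun i _ => hterm i, Finset.sum_add_distrib]
  by_cases ha0 : a = 0
  · have hb0 : b ≠ 0 := by
      intro hb
      rw [ha0, hb] at hxa
      simp at hxa
    have h1 : ∑ i, ⟪R₁ (u i) a a, u i⟫_ℝ = 0 := by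
      rw [ha0]
      simp
    have h2 := hS2 hb0
    linarith
  · have h1 := hS1 ha0
    by_cases hb0 : b = 0
    · have h2 : ∑ i, ⟪R₂ (v i) b b, v i⟫_ℝ = 0 := by
        rw [hb0]
        simp
      linarith
    · have h2 := hS2 hb0
      linarith
end

section
/- The product algebraic curvature tensor on R^3 ⊕ R^3, where each factor carries the constant-curvature-one algebraic curvature tensor R_i(x,y)z = ⟨y,z⟩x − ⟨x,z⟩y, has positive 4-intermediate Ricci curvature but does not have positive 3-intermediate Ricci curvature. -/
/-- The constant-curvature-one algebraic curvature tensor on `ℝ³`: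
`R(x,y)z = ⟪y,z⟫ x − ⟪x,z⟫ y`. -/
noncomputable def Rround (x y z : EuclideanSpace ℝ (Fin 3)) : EuclideanSpace ℝ (Fin 3) :=
  (inner ℝ y z : ℝ) • x - (inner ℝ x z : ℝ) • y

/-- The product algebraic curvature tensor on `ℝ³ ⊕ ℝ³` of two copies of the
constant-curvature-one tensor. -/
noncomputable def RprodS3S3 (x y z :
    WithLp 2 (EuclideanSpace ℝ (Fin 3) × EuclideanSpace ℝ (Fin 3))) :
    WithLp 2 (EuclideanSpace ℝ (Fin 3) × EuclideanSpace ℝ (Fin 3)) :=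
  (WithLp.equiv 2 _).symm
    (Rround (WithLp.equiv 2 _ x).1 (WithLp.equiv 2 _ y).1 (WithLp.equiv 2 _ z).1,
     Rround (WithLp.equiv 2 _ x).2 (WithLp.equiv 2 _ y).2 (WithLp.equiv 2 _ z).2)

local notation "E3" => EuclideanSpace ℝ (Fin 3)
local notation "V6" => WithLp 2 (EuclideanSpace ℝ (Fin 3) × EuclideanSpace ℝ (Fin 3))

lemma term_eq (x y : V6) : (inner ℝ (RprodS3S3 y x x) y : ℝ) =
    ((inner ℝ x.fst x.fst : ℝ) * (inner ℝ y.fst y.fst : ℝ) - (inner ℝ y.fst x.fst : ℝ)^2)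
    + ((inner ℝ x.snd x.snd : ℝ) * (inner ℝ y.snd y.snd : ℝ) - (inner ℝ y.snd x.snd : ℝ)^2) := by
  simp only [RprodS3S3, Rround, WithLp.prod_inner_apply, inner_sub_left, real_inner_smul_left,
    real_inner_smul_right, real_inner_comm, WithLp.equiv_symm_apply, WithLp.equiv_apply, WithLp.toLp_fst, WithLp.toLp_snd,
    WithLp.ofLp_fst, WithLp.ofLp_snd]
  ring

lemma cs_nonneg {F : Type*} [NormedAddCommGroup F] [InnerProductSpace ℝ F] (a b : F) :
    0 ≤ (inner ℝ a a : ℝ) * (inner ℝ b b : ℝ) - (inner ℝ b a : ℝ)^2 := by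
  have := real_inner_mul_inner_self_le b a
  nlinarith

lemma cs_span {F : Type*} [NormedAddCommGroup F] [InnerProductSpace ℝ F] {a b : F} (ha : a ≠ 0)
    (h : (inner ℝ a a : ℝ) * (inner ℝ b b : ℝ) - (inner ℝ b a : ℝ)^2 = 0) : ∃ r : ℝ, b = r • a := by
  rcases eq_or_ne b 0 with rfl | hb
  · exact ⟨0, by simp⟩
  have h2 : (inner ℝ b a : ℝ)^2 = (‖a‖ * ‖b‖)^2 := by
    have ha2 : (inner ℝ a a : ℝ) = ‖a‖^2 := real_inner_self_eq_norm_sq a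
    have hb2 : (inner ℝ b b : ℝ) = ‖b‖^2 := real_inner_self_eq_norm_sq b
    rw [ha2, hb2] at h; nlinarith
  have key : ‖(inner ℝ a b : ℝ)‖ = ‖a‖ * ‖b‖ := by
    rw [Real.norm_eq_abs, ← Real.sqrt_sq_eq_abs, real_inner_comm, h2,
      Real.sqrt_sq (by positivity)]
  obtain ⟨r, _, hr⟩ := (norm_inner_eq_norm_iff (𝕜 := ℝ) ha hb).mp key
  exact ⟨r, hr⟩

lemma li_card_le {V : Type*} [NormedAddCommGroup V] [InnerProductSpace ℝ V]
    [FiniteDimensional ℝ V] {n : ℕ} {y : Fin n → V} (hy : LinearIndependent ℝ y)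
    {W : Submodule ℝ V} (hW : ∀ i, y i ∈ W) : n ≤ Module.finrank ℝ W := by
  have h1 : Submodule.span ℝ (Set.range y) ≤ W :=
    Submodule.span_le.mpr (Set.range_subset_iff.mpr hW)
  calc n = Fintype.card (Fin n) := (Fintype.card_fin n).symm
    _ = Module.finrank ℝ (Submodule.span ℝ (Set.range y)) := (finrank_span_eq_card hy).symm
    _ ≤ Module.finrank ℝ W := Submodule.finrank_mono h1

theorem pos4 : PosIntermediateRic 4 RprodS3S3 := by
  intro x y h
  by_contra hc
  push_neg at hc
  set t1 : Fin 4 → ℝ := fun i =>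
    (inner ℝ x.fst x.fst : ℝ) * (inner ℝ (y i).fst (y i).fst : ℝ) - (inner ℝ (y i).fst x.fst : ℝ)^2 with ht1
  set t2 : Fin 4 → ℝ := fun i =>
    (inner ℝ x.snd x.snd : ℝ) * (inner ℝ (y i).snd (y i).snd : ℝ) - (inner ℝ (y i).snd x.snd : ℝ)^2 with ht2
  have h1n : ∀ i, 0 ≤ t1 i := fun i => cs_nonneg x.fst (y i).fst
  have h2n : ∀ i, 0 ≤ t2 i := fun i => cs_nonneg x.snd (y i).snd
  have hre : ∑ i : Fin 4, (inner ℝ (RprodS3S3 (y i) x x) (y i) : ℝ) = ∑ i, (t1 i + t2 i) :=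
    Finset.sum_congr rfl fun i _ => term_eq x (y i)
  have hsum0 : ∑ i, (t1 i + t2 i) = 0 := by
    have hge : 0 ≤ ∑ i, (t1 i + t2 i) :=
      Finset.sum_nonneg fun i _ => add_nonneg (h1n i) (h2n i)
    rw [hre] at hc
    linarith
  have hzero : ∀ i, t1 i = 0 ∧ t2 i = 0 := by
    intro i
    have := (Finset.sum_eq_zero_iff_of_nonneg
      (fun i _ => add_nonneg (h1n i) (h2n i))).mp hsum0 i (Finset.mem_univ i)
    exact ⟨le_antisymm (by linarith [h2n i]) (h1n i), le_antisymm (by linarith [h1n i]) (h2n i)⟩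
  -- orthonormality facts
  have hy : Orthonormal ℝ y := by
    have := h.comp Fin.succ (Fin.succ_injective _)
    simpa [Function.comp_def] using this
  have hxy : ∀ i : Fin 4, (inner ℝ x (y i) : ℝ) = 0 := by
    intro i
    have := h.2 (i := 0) (j := i.succ) (Fin.succ_ne_zero i).symm
    simpa using this
  have hxnorm : ‖x‖ = 1 := by simpa using h.1 0
  have hxne : x ≠ 0 := by intro h0; rw [h0] at hxnorm; simp at hxnorm
  rcases eq_or_ne x.fst 0 with hx1 | hx1
  · have hx2 : x.snd ≠ 0 := fun h2 => hxne ((WithLp.equiv 2 _).injective (Prod.ext hx1 h2))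
    have hy2 : ∀ i, (y i).snd = 0 := by
      intro i
      obtain ⟨r, hr⟩ := cs_span hx2 (hzero i).2
      have h0 := hxy i
      rw [WithLp.prod_inner_apply, WithLp.ofLp_fst x, WithLp.ofLp_snd x,
          WithLp.ofLp_fst (y i), WithLp.ofLp_snd (y i), hx1, inner_zero_left, zero_add, hr,
        real_inner_smul_right] at h0
      have hne : (inner ℝ x.snd x.snd : ℝ) ≠ 0 := fun h' => hx2 (inner_self_eq_zero.mp h')
      have : r = 0 := by
        rcases mul_eq_zero.mp h0 with h' | h'
        · exact h'
        · exact absurd h' hne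
      rw [hr, this, zero_smul]
    have hON : Orthonormal ℝ (fun i => (y i).fst) := by
      rw [orthonormal_iff_ite]
      intro i j
      have := orthonormal_iff_ite.mp hy i j
      rw [WithLp.prod_inner_apply, WithLp.ofLp_fst (y i), WithLp.ofLp_snd (y i), hy2 i, inner_zero_left, add_zero] at this
      exact this
    have hle := li_card_le hON.linearIndependent (W := ⊤) (fun i => Submodule.mem_top)
    rw [finrank_top, finrank_euclideanSpace_fin] at hle
    omega
  · rcases eq_or_ne x.snd 0 with hx2 | hx2
    · have hy1 : ∀ i, (y i).fst = 0 := by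
        intro i
        obtain ⟨r, hr⟩ := cs_span hx1 (hzero i).1
        have h0 := hxy i
        rw [WithLp.prod_inner_apply, WithLp.ofLp_fst x, WithLp.ofLp_snd x,
          WithLp.ofLp_fst (y i), WithLp.ofLp_snd (y i), hx2, inner_zero_left, add_zero, hr,
          real_inner_smul_right] at h0
        have hne : (inner ℝ x.fst x.fst : ℝ) ≠ 0 := fun h' => hx1 (inner_self_eq_zero.mp h')
        have : r = 0 := by
          rcases mul_eq_zero.mp h0 with h' | h'
          · exact h'
          · exact absurd h' hne
        rw [hr, this, zero_smul]
      have hON : Orthonormal ℝ (fun i => (y i).snd) := by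
        rw [orthonormal_iff_ite]
        intro i j
        have := orthonormal_iff_ite.mp hy i j
        rw [WithLp.prod_inner_apply, WithLp.ofLp_fst (y i), WithLp.ofLp_snd (y i), hy1 i, inner_zero_left, zero_add] at this
        exact this
      have hle := li_card_le hON.linearIndependent (W := ⊤) (fun i => Submodule.mem_top)
      rw [finrank_top, finrank_euclideanSpace_fin] at hle
      omega
    · set a : V6 := (WithLp.equiv 2 _).symm (x.fst, 0) with ha
      set b : V6 := (WithLp.equiv 2 _).symm (0, x.snd) with hb
      set W := Submodule.span ℝ ({a, b} : Set (WithLp 2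
        (EuclideanSpace ℝ (Fin 3) × EuclideanSpace ℝ (Fin 3)))) with hW
      have hmem : ∀ i, y i ∈ W := by
        intro i
        obtain ⟨r, hr1⟩ := cs_span hx1 (hzero i).1
        obtain ⟨s, hr2⟩ := cs_span hx2 (hzero i).2
        have hyi : y i = r • a + s • b := by
          refine (WithLp.equiv 2 _).injective (Prod.ext ?_ ?_)
          · show (y i).fst = r • x.fst + s • (0 : E3)
            rw [smul_zero, add_zero]; exact hr1
          · show (y i).snd = r • (0 : E3) + s • x.snd
            rw [smul_zero, zero_add]; exact hr2
        rw [hyi]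
        exact Submodule.add_mem _
          (Submodule.smul_mem _ _ (Submodule.subset_span (by simp)))
          (Submodule.smul_mem _ _ (Submodule.subset_span (by simp)))
      have hle := li_card_le hy.linearIndependent hmem
      have hfr : Module.finrank ℝ W ≤ 2 := by
        classical
        refine (finrank_span_le_card _).trans ?_
        simp [Set.toFinset_insert]
        exact Finset.card_insert_le _ _
      omega

theorem notpos3 : ¬ PosIntermediateRic 3 RprodS3S3 := by
  intro hP
  set x : V6 := (WithLp.equiv 2 _).symm (EuclideanSpace.single 0 1, 0) with hx
  set y : Fin 3 → V6 := fun i => (WithLp.equiv 2 _).symm (0, EuclideanSpace.single i 1) with hy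
  have hON : Orthonormal ℝ (Fin.cons x y : Fin 4 → V6) := by
    rw [orthonormal_iff_ite]
    intro i j
    induction i using Fin.cases with
    | zero =>
      induction j using Fin.cases with
      | zero =>
        simp [hx, WithLp.prod_inner_apply, EuclideanSpace.inner_single_left,
          EuclideanSpace.single_apply]
      | succ j =>
        simp [hx, hy, WithLp.prod_inner_apply, (Fin.succ_ne_zero j).symm]
    | succ i =>
      induction j using Fin.cases with
      | zero => simp [hx, hy, WithLp.prod_inner_apply, Fin.succ_ne_zero i]
      | succ j =>
        simp [hy, WithLp.prod_inner_apply, EuclideanSpace.inner_single_left,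
          EuclideanSpace.single_apply, Fin.succ_inj, eq_comm]
  have hpos := hP x y hON
  have hzero : ∑ i : Fin 3, (inner ℝ (RprodS3S3 (y i) x x) (y i) : ℝ) = 0 := by
    apply Finset.sum_eq_zero; intro i _
    rw [term_eq]
    simp [hx, hy]
  rw [hzero] at hpos; exact lt_irrefl 0 hpos


/-- The product curvature tensor on `ℝ³ ⊕ ℝ³` (corresponding to the product metric on
`S³ × S³`) has positive 4-intermediate Ricci curvature but not positive 3-intermediate
Ricci curvature. -/
theorem stmt4 :
    PosIntermediateRic 4 RprodS3S3 ∧ ¬ PosIntermediateRic 3 RprodS3S3 := by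
  exact ⟨pos4, notpos3⟩
end
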